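/- arXiv:1909.06035 — 2 statements merged into one kernel-verified Lean document; each statement's English description precedes it below -/
import Mathlib

section
/- For each fixed c > 0, the function s ↦ g(c, s) is continuous on the interval [0, 1]. -/
open MeasureTheory ProbabilityTheory

/-- The logistic sigmoid `S(t) = 1/(1 + exp(-t))`. -/
noncomputable def S (t : ℝ) : ℝ := 1 / (1 + Real.exp (-t))

/-- The standard Gaussian measure on `ℝ`. -/
noncomputable def γ : Measure ℝ := gaussianReal 0 1

/-- The validation mean `μᵥ(s) := √(2(1 - s²))`. -/
noncomputable def μv (s : ℝ) : ℝ := Real.sqrt (2 * (1 - s ^ 2))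

/-- `g(c, s) := -E_Z[(S(c(μᵥ(s) + s Z)) - 1)(μᵥ(s) + s Z)]` for a standard Gaussian `Z`. -/
noncomputable def g (c s : ℝ) : ℝ :=
  -∫ z, (S (c * (μv s + s * z)) - 1) * (μv s + s * z) ∂γ

/-- `σ₀(c) := sup { s ∈ [0,1] : g(c, s) ≥ 0 }`. -/
noncomputable def σ₀ (c : ℝ) : ℝ := sSup {s : ℝ | s ∈ Set.Icc (0 : ℝ) 1 ∧ 0 ≤ g c s}

instance : IsGaussian γ := isGaussian_gaussianReal 0 1

@[fun_prop]
lemma continuous_S : Continuous S := by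
  unfold S
  exact continuous_const.div (by fun_prop) fun t => by positivity

lemma abs_S_sub_one_le_one (t : ℝ) : |S t - 1| ≤ 1 := by
  have h_pos : 0 < S t := by unfold S; positivity
  have h_le : S t ≤ 1 := by
    unfold S
    rw [div_le_one (by positivity)]
    linarith [Real.exp_pos (-t)]
  rw [abs_le]
  constructor <;> linarith

lemma continuous_μv : Continuous μv := by
  unfold μv
  fun_prop

theorem continuous_integral_mul_affine {X : Type*} [TopologicalSpace X] [FirstCountableTopology X]
    {μ : Measure ℝ} [IsFiniteMeasure μ] (hμ : Integrable id μ) {φ : ℝ → ℝ} (hφ : Continuous φ)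
    {C : ℝ} (hφC : ∀ t, |φ t| ≤ C) {a b : X → ℝ} (ha : Continuous a) (hb : Continuous b) :
    Continuous fun x => ∫ z, φ (a x + b x * z) * (a x + b x * z) ∂μ := by
  refine continuous_iff_continuousAt.2 fun x₀ => ?_
  set A := |a x₀| + 1
  set B := |b x₀| + 1
  have ha_near : ∀ᶠ x in nhds x₀, |a x| < A :=
    ha.abs.continuousAt.eventually (gt_mem_nhds (lt_add_one _))
  have hb_near : ∀ᶠ x in nhds x₀, |b x| < B :=
    hb.abs.continuousAt.eventually (gt_mem_nhds (lt_add_one _))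
  have hC : 0 ≤ C := (abs_nonneg _).trans (hφC 0)
  refine continuousAt_of_dominated (bound := fun z => C * (A + B * |z|)) ?_ ?_ ?_ ?_
  · exact Filter.Eventually.of_forall fun x =>
      (by fun_prop : Continuous fun z => φ (a x + b x * z) * (a x + b x * z)).aestronglyMeasurable
  · filter_upwards [ha_near, hb_near] with x hax hbx
    refine Filter.Eventually.of_forall fun z => ?_
    have h_affine : |a x + b x * z| ≤ A + B * |z| := calc
      |a x + b x * z| ≤ |a x| + |b x| * |z| := (abs_add_le _ _).trans_eq (by rw [abs_mul])
      _ ≤ A + B * |z| := by gcongr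
    rw [Real.norm_eq_abs, abs_mul]
    exact mul_le_mul (hφC _) h_affine (abs_nonneg _) hC
  · exact ((integrable_const A).add (hμ.abs.const_mul B)).const_mul C
  · exact Filter.Eventually.of_forall fun z => by fun_prop

lemma continuous_g (c : ℝ) : Continuous (g c) :=
  (continuous_integral_mul_affine IsGaussian.integrable_id (φ := fun t => S (c * t) - 1)
    (by fun_prop) (fun t => abs_S_sub_one_le_one (c * t)) continuous_μv continuous_id).neg

theorem stmt12_general (c : ℝ) : ContinuousOn (fun s => g c s) (Set.Icc 0 1) :=
  (continuous_g c).continuousOn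

/-- For each fixed `c > 0`, the function `s ↦ g(c, s)` is continuous on `[0, 1]`. -/
theorem stmt12 (c : ℝ) (hc : 0 < c) : ContinuousOn (fun s => g c s) (Set.Icc 0 1) :=
  stmt12_general c
end

section
/- For each c > 0, define σ₀(c) := sup{ s ∈ [0,1] : g(c, s) ≥ 0 }. Then σ₀(c) ∈ (0, 1), g(c, σ₀(c)) = 0, and g(c, s) < 0 for every s ∈ (σ₀(c), 1]. -/
/-!
`g(c, ·)` is continuous on `[0, 1]` by dominated convergence, the integrand being bounded by
`|μᵥ(s) + s Z| ≤ √2 + |Z|`. At `s = 0` the integrand is deterministic and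
`g(c, 0) = √2 (1 - S(c√2)) > 0`. At `s = 1` we have `μᵥ = 0`, and pairing `z` with `-z` under the
symmetric Gaussian gives `g(c, 1) = -½ E[(S(cZ) - S(-cZ)) Z] < 0`, as `S` is increasing and `c > 0`.
For a continuous function that is positive at `a` and negative at `b`, the supremum of the points
of `[a, b]` where it is nonnegative is attained (the set is closed), is a zero lying strictly inside,
and the function is negative to its right by the definition of the supremum.
-/

open MeasureTheory ProbabilityTheory

open Set Filter Topology

section LastNonneg

variable {α β : Type*} [ConditionallyCompleteLinearOrder α] [LinearOrder β] [Zero β]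

noncomputable def lastNonneg (f : α → β) (a b : α) : α := sSup {s | s ∈ Icc a b ∧ 0 ≤ f s}

lemma lt_zero_of_lastNonneg_lt {f : α → β} {a b s : α} (hs : s ∈ Icc a b)
    (hlt : lastNonneg f a b < s) : f s < 0 :=
  not_le.mp fun h => hlt.not_ge (le_csSup ⟨b, fun _ ht => ht.1.2⟩ ⟨hs, h⟩)

variable [TopologicalSpace α] [OrderTopology α] [DenselyOrdered α] [TopologicalSpace β]
  [OrderClosedTopology β]

theorem ContinuousOn.lastNonneg_spec {f : α → β} {a b : α} (hab : a ≤ b)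
    (hf : ContinuousOn f (Icc a b)) (ha : 0 < f a) (hb : f b < 0) :
    lastNonneg f a b ∈ Ioo a b ∧ f (lastNonneg f a b) = 0 ∧
      ∀ s ∈ Ioc (lastNonneg f a b) b, f s < 0 := by
  set σ := lastNonneg f a b
  have hσ : σ ∈ {s | s ∈ Icc a b ∧ 0 ≤ f s} :=
    (hf.preimage_isClosed_of_isClosed isClosed_Icc isClosed_Ici).csSup_mem
      ⟨a, ⟨le_rfl, hab⟩, ha.le⟩ ⟨b, fun _ ht => ht.1.2⟩
  have hσb : σ < b := hσ.1.2.lt_of_ne fun h => (h ▸ hb).not_ge hσ.2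
  have hright : ∀ s ∈ Ioc σ b, f s < 0 := fun s hs =>
    lt_zero_of_lastNonneg_lt ⟨hσ.1.1.trans hs.1.le, hs.2⟩ hs.1
  have hσ_le : f σ ≤ 0 := by
    have := nhdsGT_neBot_of_exists_gt ⟨b, hσb⟩
    have : Tendsto f (𝓝[>] σ) (𝓝 (f σ)) :=
      (hf σ hσ.1).mono_of_mem_nhdsWithin (Icc_mem_nhdsGT_of_mem ⟨hσ.1.1, hσb⟩)
    refine le_of_tendsto this ?_
    filter_upwards [Ioo_mem_nhdsGT hσb] with s hs using (hright s ⟨hs.1, hs.2.le⟩).le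
  have hσ0 : f σ = 0 := le_antisymm hσ_le hσ.2
  exact ⟨⟨hσ.1.1.lt_of_ne fun h => (h ▸ ha).ne' hσ0, hσb⟩, hσ0, hright⟩

end LastNonneg

lemma integral_pos_of_add_comp_neg_pos {μ : Measure ℝ} [μ.IsNegInvariant] [NullSingletonClass μ]
    [NeZero μ] {f : ℝ → ℝ} (hf : Integrable f μ) (hpos : ∀ z ≠ 0, 0 < f z + f (-z)) :
    0 < ∫ z, f z ∂μ := by
  have hne : ∀ᵐ z ∂μ, z ≠ 0 := measure_eq_zero_iff_ae_notMem.mp (measure_singleton 0)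
  have hsupp : {0}ᶜ ⊆ Function.support fun z => f z + f (-z) := fun z hz => (hpos z hz).ne'
  have : 0 < ∫ z, (f z + f (-z)) ∂μ := by
    rw [integral_pos_iff_support_of_nonneg_ae (hne.mono fun z hz => (hpos z hz).le)
      (hf.add hf.comp_neg)]
    calc 0 < μ univ := Measure.measure_univ_pos.mpr (NeZero.ne μ)
      _ = μ {0}ᶜ := (measure_congr (ae_eq_univ.mpr (by simp))).symm
      _ ≤ _ := measure_mono hsupp
  rw [integral_add hf hf.comp_neg, integral_neg_eq_self] at this
  linarith

lemma σ₀_eq_lastNonneg (c : ℝ) : σ₀ c = lastNonneg (g c) 0 1 := rfl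

lemma S_eq_sigmoid : S = Real.sigmoid := funext fun t => by simp [S, Real.sigmoid]

instance isNegInvariant_gaussianReal_zero (v : NNReal) : (gaussianReal 0 v).IsNegInvariant :=
  ⟨by simpa [Measure.neg_def] using gaussianReal_map_neg (μ := 0) (v := v)⟩

instance : IsProbabilityMeasure γ := inferInstanceAs (IsProbabilityMeasure (gaussianReal 0 1))
instance : γ.IsNegInvariant := inferInstanceAs (gaussianReal 0 1).IsNegInvariant
instance : NullSingletonClass γ := nullSingletonClass_gaussianReal one_ne_zero

lemma integrable_abs_γ : Integrable (fun z => |z|) γ :=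
  ((memLp_id_gaussianReal 1).integrable le_rfl).abs

noncomputable def gIntegrand (c w : ℝ) : ℝ := (S (c * w) - 1) * w

lemma g_eq_integral_gIntegrand (c s : ℝ) : g c s = -∫ z, gIntegrand c (μv s + s * z) ∂γ := rfl

lemma continuous_gIntegrand (c : ℝ) : Continuous (gIntegrand c) := by
  unfold gIntegrand; rw [S_eq_sigmoid]; fun_prop

lemma abs_gIntegrand_le (c w : ℝ) : |gIntegrand c w| ≤ |w| := by
  rw [gIntegrand, abs_mul, S_eq_sigmoid]
  have : |Real.sigmoid (c * w) - 1| ≤ 1 := by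
    rw [abs_le]; constructor <;> linarith [Real.sigmoid_pos (c * w), Real.sigmoid_lt_one (c * w)]
  exact mul_le_of_le_one_left (abs_nonneg w) this

lemma gIntegrand_add_gIntegrand_neg_pos {c w : ℝ} (hc : 0 < c) (hw : w ≠ 0) :
    0 < gIntegrand c w + gIntegrand c (-w) := by
  have key : gIntegrand c w + gIntegrand c (-w) =
      (Real.sigmoid (c * w) - Real.sigmoid (c * -w)) * w := by
    simp only [gIntegrand, S_eq_sigmoid]; ring
  rw [key]
  rcases hw.lt_or_gt with hw | hw
  · exact mul_pos_of_neg_of_neg (sub_neg.mpr (Real.sigmoid_lt (by nlinarith))) hw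
  · exact mul_pos (sub_pos.mpr (Real.sigmoid_lt (by nlinarith))) hw

lemma integrable_gIntegrand_affine (c a b : ℝ) :
    Integrable (fun z => gIntegrand c (a + b * z)) γ := by
  refine ((integrable_const |a|).add (integrable_abs_γ.const_mul |b|)).mono'
    ((continuous_gIntegrand c).comp (by fun_prop)).aestronglyMeasurable (.of_forall fun z => ?_)
  calc ‖gIntegrand c (a + b * z)‖ ≤ |a + b * z| := abs_gIntegrand_le c _
    _ ≤ |a| + |b| * |z| := by rw [← abs_mul]; exact abs_add_le _ _

lemma abs_μv_le_sqrt_two (s : ℝ) : |μv s| ≤ Real.sqrt 2 :=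
  (abs_of_nonneg (Real.sqrt_nonneg _)).trans_le (Real.sqrt_le_sqrt (by nlinarith [sq_nonneg s]))

lemma continuousOn_g (c : ℝ) : ContinuousOn (g c) (Icc 0 1) := by
  refine (continuousOn_of_dominated (bound := fun z => Real.sqrt 2 + |z|)
    (fun s _ => (integrable_gIntegrand_affine c _ s).aestronglyMeasurable) (fun s hs => ?_)
    ((integrable_const _).add integrable_abs_γ) (.of_forall fun z => ?_)).neg
  · refine .of_forall fun z => (abs_gIntegrand_le c _).trans ?_
    have hs' : |s| ≤ 1 := abs_le.mpr ⟨by linarith [hs.1], hs.2⟩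
    calc |μv s + s * z| ≤ |μv s| + |s * z| := abs_add_le _ _
      _ ≤ Real.sqrt 2 + |z| := by
        rw [abs_mul]
        exact add_le_add (abs_μv_le_sqrt_two s) (mul_le_of_le_one_left (abs_nonneg z) hs')
  · exact ((continuous_gIntegrand c).comp (by unfold μv; fun_prop)).continuousOn

lemma g_zero_pos (c : ℝ) : 0 < g c 0 := by
  have hμv : μv 0 = Real.sqrt 2 := by simp [μv]
  rw [g_eq_integral_gIntegrand, hμv]
  simp only [zero_mul, add_zero, integral_const, probReal_univ, one_smul, gIntegrand, S_eq_sigmoid]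
  have := Real.sigmoid_lt_one (c * Real.sqrt 2)
  have : 0 < Real.sqrt 2 := by positivity
  nlinarith

lemma g_one_neg {c : ℝ} (hc : 0 < c) : g c 1 < 0 := by
  have hμv : μv 1 = 0 := by simp [μv]
  rw [g_eq_integral_gIntegrand, hμv, neg_neg_iff_pos]
  simp only [zero_add, one_mul]
  exact integral_pos_of_add_comp_neg_pos (f := gIntegrand c)
    (by simpa using integrable_gIntegrand_affine c 0 1)
    (fun z hz => gIntegrand_add_gIntegrand_neg_pos hc hz)

/-- For each `c > 0`, the threshold `σ₀(c) := sup { s ∈ [0,1] : g(c, s) ≥ 0 }` satisfies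
`σ₀(c) ∈ (0, 1)`, `g(c, σ₀(c)) = 0`, and `g(c, s) < 0` for every `s ∈ (σ₀(c), 1]`. -/
theorem stmt13 (c : ℝ) (hc : 0 < c) :
    σ₀ c ∈ Set.Ioo (0 : ℝ) 1 ∧ g c (σ₀ c) = 0 ∧
      ∀ s ∈ Set.Ioc (σ₀ c) 1, g c s < 0 := by
  rw [σ₀_eq_lastNonneg]
  exact (continuousOn_g c).lastNonneg_spec zero_le_one (g_zero_pos c) (g_one_neg hc)
end
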